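/- arXiv:1207.2507 — 4 statements merged into one kernel-verified Lean document; each statement's English description precedes it below -/
import Mathlib

section
/- Let J ⊆ {1,…,n}, let F_J = {c ∈ ℝ^n_{≥0} : c_i = 0 for i ∈ J} and let ri(F_J) = {c ∈ F_J : c_j > 0 for j ∉ J}. Let w_r(c) = k_r ∏_i a_i(c)^{α_{ri}} with k_r > 0, α_{ri} ≥ 0, a_i(c) = c_i g_i(c), g_i(c) > 0. If for some point c* ∈ ri(F_J) and some index i ∈ J one has ∑_r γ_{ri} w_r(c*) = 0, then ∑_r γ_{ri} w_r(c) = 0 for all c ∈ F_J. -/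
set_option autoImplicit false

/-!
At a point `c*` of the relative interior of `F_J` with `c*_i = 0` (`i ∈ J`), a rate `w_r` with
`α_{ri} ≠ 0` vanishes, so every term `γ_{ri} w_r(c*)` is nonnegative; a vanishing sum forces each
term to vanish. A rate vanishes at `c ≥ 0` exactly when some species with `c_j = 0` enters it with
`α_{rj} ≠ 0`; at `c*` such a `j` lies in `J`, so the same rate vanishes on all of `F_J`.
-/

open Finset

section MassAction

variable {ι : Type*} [Fintype ι] {k b : ℝ} {a c c' y y' : ι → ℝ}

lemma mul_prod_rpow_nonneg (hk : 0 < k) (hy : ∀ j, 0 < y j) (hc : ∀ j, 0 ≤ c j) :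
    0 ≤ k * ∏ j, (c j * y j) ^ a j :=
  mul_nonneg hk.le <| prod_nonneg fun j _ => Real.rpow_nonneg (mul_nonneg (hc j) (hy j).le) _

lemma mul_prod_rpow_eq_zero_iff (hk : 0 < k) (hy : ∀ j, 0 < y j) (hc : ∀ j, 0 ≤ c j) :
    k * ∏ j, (c j * y j) ^ a j = 0 ↔ ∃ j, c j = 0 ∧ a j ≠ 0 := by
  simp only [mul_eq_zero, hk.ne', false_or, prod_eq_zero_iff, mem_univ, true_and,
    Real.rpow_eq_zero_iff_of_nonneg (mul_nonneg (hc _) (hy _).le), (hy _).ne', or_false]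

lemma mul_prod_rpow_eq_zero_of_zero_set_subset (hk : 0 < k) (hy : ∀ j, 0 < y j)
    (hy' : ∀ j, 0 < y' j) (hc : ∀ j, 0 ≤ c j) (hc' : ∀ j, 0 ≤ c' j)
    (hzero : ∀ j, c j = 0 → c' j = 0) (h : k * ∏ j, (c j * y j) ^ a j = 0) :
    k * ∏ j, (c' j * y' j) ^ a j = 0 := by
  obtain ⟨j, hcj, haj⟩ := (mul_prod_rpow_eq_zero_iff hk hy hc).mp h
  exact (mul_prod_rpow_eq_zero_iff hk hy' hc').mpr ⟨j, hzero j hcj, haj⟩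

/-- With species `i` absent, a reaction with `a i ≠ 0` has rate zero. -/
lemma sub_mul_mul_prod_rpow_nonneg (hb : 0 ≤ b) (hk : 0 < k) (hy : ∀ j, 0 < y j)
    (hc : ∀ j, 0 ≤ c j) {i : ι} (hci : c i = 0) :
    0 ≤ (b - a i) * (k * ∏ j, (c j * y j) ^ a j) := by
  by_cases hai : a i = 0
  · rw [hai, sub_zero]
    exact mul_nonneg hb (mul_prod_rpow_nonneg hk hy hc)
  · rw [(mul_prod_rpow_eq_zero_iff hk hy hc).mpr ⟨i, hci, hai⟩, mul_zero]

end MassAction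

open Finset in
theorem sum_rate_zero_on_face_general (n m : ℕ) (α β : Fin m → (Fin n → ℝ))
    (hβ : ∀ r i, 0 ≤ β r i)
    (k : Fin m → ℝ) (hk : ∀ r, 0 < k r)
    (g : (Fin n → ℝ) → (Fin n → ℝ)) (hg : ∀ c i, 0 < g c i)
    (w : Fin m → (Fin n → ℝ) → ℝ)
    (hw : ∀ r c, w r c = k r * ∏ j, (c j * g c j) ^ (α r j))
    (J : Finset (Fin n)) (i : Fin n) (hi : i ∈ J)
    (cstar : Fin n → ℝ) (hcstar₀ : ∀ j ∈ J, cstar j = 0)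
    (hcstar₁ : ∀ j ∉ J, 0 < cstar j)
    (hzero : ∑ r, (β r i - α r i) * w r cstar = 0) :
    ∀ c : Fin n → ℝ, (∀ j, 0 ≤ c j) → (∀ j ∈ J, c j = 0) →
      ∑ r, (β r i - α r i) * w r c = 0 := by
  intro c hc hcJ
  have hcstar : ∀ j, 0 ≤ cstar j := fun j => by
    by_cases hj : j ∈ J
    · exact (hcstar₀ j hj).ge
    · exact (hcstar₁ j hj).le
  have hterm : ∀ r, (β r i - α r i) * w r cstar = 0 := fun r =>
    (sum_eq_zero_iff_of_nonneg fun r _ => hw r cstar ▸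
      sub_mul_mul_prod_rpow_nonneg (hβ r i) (hk r) (hg cstar) hcstar (hcstar₀ i hi)).mp
      hzero r (mem_univ r)
  have hzero_set : ∀ j, cstar j = 0 → c j = 0 := fun j hj =>
    hcJ j (not_not.mp fun hjJ => (hcstar₁ j hjJ).ne' hj)
  refine sum_eq_zero fun r _ => ?_
  rcases mul_eq_zero.mp (hterm r) with hγ | hwr
  · rw [hγ, zero_mul]
  · rw [hw] at hwr ⊢
    rw [mul_prod_rpow_eq_zero_of_zero_set_subset (hk r) (hg cstar) (hg c) hcstar hc
      hzero_set hwr, mul_zero]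

open Finset in
/-- If ∑_r γ_{ri} w_r vanishes at one point of the relative interior of a face
F_J (for an index i ∈ J), then it vanishes on the whole face F_J. -/
theorem sum_rate_zero_on_face (n m : ℕ) (α β : Fin m → (Fin n → ℝ))
    (hα : ∀ r i, 0 ≤ α r i) (hβ : ∀ r i, 0 ≤ β r i)
    (k : Fin m → ℝ) (hk : ∀ r, 0 < k r)
    (g : (Fin n → ℝ) → (Fin n → ℝ)) (hg : ∀ c i, 0 < g c i)
    (w : Fin m → (Fin n → ℝ) → ℝ)
    (hw : ∀ r c, w r c = k r * ∏ j, (c j * g c j) ^ (α r j))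
    (J : Finset (Fin n)) (i : Fin n) (hi : i ∈ J)
    (cstar : Fin n → ℝ) (hcstar₀ : ∀ j ∈ J, cstar j = 0)
    (hcstar₁ : ∀ j ∉ J, 0 < cstar j)
    (hzero : ∑ r, (β r i - α r i) * w r cstar = 0) :
    ∀ c : Fin n → ℝ, (∀ j, 0 ≤ c j) → (∀ j ∈ J, c j = 0) →
      ∑ r, (β r i - α r i) * w r c = 0 :=
  sum_rate_zero_on_face_general n m α β hβ k hk g hg w hw J i hi cstar hcstar₀ hcstar₁ hzero
end

section
/- With the setting of the generalized mass action law (w_r(c) = k_r ∏ a_i^{α_{ri}}, a_i = c_i g_i(c), g_i > 0, k_r > 0), the following are equivalent for a face F_J and a set S of elementary reactions: (1) ∑_{r∈S} γ_{ri} w_r(c) = 0 for some point c ∈ ri(F_J) and all i ∈ J; (2) ∑_{r∈S} γ_{ri} w_r(c) = 0 for all c ∈ F_J and all i ∈ J; (3) each single reaction r ∈ S satisfies γ_{ri} w_r(c) = 0 on F_J for all i ∈ J; (4) for every r ∈ S, either γ_{rj} = 0 for all j ∈ J, or α_{rj} > 0 for some j ∈ J. -/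
set_option autoImplicit false

/-!
On the face `F_J` every species `i ∈ J` has `c_i = 0`, so a reaction consuming `i`
(`α_{ri} > 0`) has rate zero there. Hence each term `γ_{ri} w_r(c)` of the net production
of `i` is nonnegative, and the sum over `S` vanishes only if every term does. At a point of
`ri(F_J)` the rate `w_r` is positive exactly when `α_{rj} = 0` for all `j ∈ J`, which turns
termwise vanishing into condition (4); conversely (4) makes every term vanish on all of `F_J`.
-/

open Finset

theorem iff_and_iff_and_iff_of_cycle {a b c d : Prop} (had : a → d) (hdc : d → c)
    (hcb : c → b) (hba : b → a) : (a ↔ b) ∧ (b ↔ c) ∧ (c ↔ d) :=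
  ⟨⟨hcb ∘ hdc ∘ had, hba⟩, ⟨hdc ∘ had ∘ hba, hcb⟩, ⟨had ∘ hba ∘ hcb, hdc⟩⟩

section MassAction

variable {ι ρ : Type*} [Fintype ι]

noncomputable def massActionRate (k : ℝ) (α : ι → ℝ) (g : (ι → ℝ) → ι → ℝ) (c : ι → ℝ) : ℝ :=
  k * ∏ j, (c j * g c j) ^ α j

variable {k : ℝ} {α β : ι → ℝ} {g : (ι → ℝ) → ι → ℝ} {c : ι → ℝ}

theorem massActionRate_eq_zero {j : ι} (hcj : c j = 0) (hαj : α j ≠ 0) :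
    massActionRate k α g c = 0 := by
  rw [massActionRate, prod_eq_zero (mem_univ j) (by rw [hcj, zero_mul, Real.zero_rpow hαj]),
    mul_zero]

theorem massActionRate_nonneg (hk : 0 ≤ k) (hc : ∀ j, 0 ≤ c j) (hg : ∀ j, 0 ≤ g c j) :
    0 ≤ massActionRate k α g c :=
  mul_nonneg hk <| prod_nonneg fun j _ => Real.rpow_nonneg (mul_nonneg (hc j) (hg j)) _

theorem massActionRate_pos (hk : 0 < k) (hg : ∀ j, 0 < g c j)
    (hc : ∀ j, 0 < c j ∨ α j = 0) : 0 < massActionRate k α g c := by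
  refine mul_pos hk (prod_pos fun j _ => ?_)
  rcases hc j with hcj | hαj
  · exact Real.rpow_pos_of_pos (mul_pos hcj (hg j)) _
  · rw [hαj, Real.rpow_zero]
    exact one_pos

theorem sub_mul_massActionRate_nonneg {i : ι} (hαi : 0 ≤ α i) (hβi : 0 ≤ β i) (hk : 0 ≤ k)
    (hc : ∀ j, 0 ≤ c j) (hg : ∀ j, 0 ≤ g c j) (hci : c i = 0) :
    0 ≤ (β i - α i) * massActionRate k α g c := by
  rcases hαi.eq_or_lt with hαi | hαi
  · rw [← hαi, sub_zero]
    exact mul_nonneg hβi (massActionRate_nonneg hk hc hg)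
  · rw [massActionRate_eq_zero hci hαi.ne', mul_zero]

theorem sub_mul_massActionRate_eq_zero {J : Finset ι}
    (h : (∀ j ∈ J, β j - α j = 0) ∨ ∃ j ∈ J, 0 < α j) (hcJ : ∀ j ∈ J, c j = 0)
    {i : ι} (hi : i ∈ J) : (β i - α i) * massActionRate k α g c = 0 := by
  rcases h with hγ | ⟨j, hj, hαj⟩
  · rw [hγ i hi, zero_mul]
  · rw [massActionRate_eq_zero (hcJ j hj) hαj.ne', mul_zero]

theorem sub_eq_zero_or_exists_pos_of_relint {J : Finset ι} (hα : ∀ j, 0 ≤ α j) (hk : 0 < k)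
    (hg : ∀ j, 0 < g c j) (hcJ : ∀ j ∉ J, 0 < c j)
    (h : ∀ i ∈ J, (β i - α i) * massActionRate k α g c = 0) :
    (∀ j ∈ J, β j - α j = 0) ∨ ∃ j ∈ J, 0 < α j := by
  refine or_iff_not_imp_right.2 fun hJ i hi => ?_
  push Not at hJ
  have hrate : 0 < massActionRate k α g c := massActionRate_pos hk hg fun j =>
    (em (j ∈ J)).elim (fun hj => .inr ((hJ j hj).antisymm (hα j))) fun hj => .inl (hcJ j hj)
  exact (mul_eq_zero.1 (h i hi)).resolve_right hrate.ne'

variable {α β : ρ → ι → ℝ} {k : ρ → ℝ}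

theorem sum_sub_mul_massActionRate_eq_zero_iff (S : Finset ρ) (hα : ∀ r j, 0 ≤ α r j)
    (hβ : ∀ r j, 0 ≤ β r j) (hk : ∀ r, 0 ≤ k r) (hc : ∀ j, 0 ≤ c j) (hg : ∀ j, 0 ≤ g c j)
    {i : ι} (hci : c i = 0) :
    ∑ r ∈ S, (β r i - α r i) * massActionRate (k r) (α r) g c = 0 ↔
      ∀ r ∈ S, (β r i - α r i) * massActionRate (k r) (α r) g c = 0 :=
  sum_eq_zero_iff_of_nonneg fun r _ =>
    sub_mul_massActionRate_nonneg (hα r i) (hβ r i) (hk r) hc hg hci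

theorem forall_sub_eq_zero_or_exists_pos_of_relint {J : Finset ι} {S : Finset ρ}
    (hα : ∀ r j, 0 ≤ α r j) (hβ : ∀ r j, 0 ≤ β r j) (hk : ∀ r, 0 < k r)
    (hg : ∀ j, 0 < g c j) (hcJ : ∀ j ∈ J, c j = 0) (hcJc : ∀ j ∉ J, 0 < c j)
    (hsum : ∀ i ∈ J, ∑ r ∈ S, (β r i - α r i) * massActionRate (k r) (α r) g c = 0) :
    ∀ r ∈ S, (∀ j ∈ J, β r j - α r j = 0) ∨ ∃ j ∈ J, 0 < α r j := by
  have hc : ∀ j, 0 ≤ c j := fun j =>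
    (em (j ∈ J)).elim (fun hj => (hcJ j hj).ge) fun hj => (hcJc j hj).le
  intro r hr
  refine sub_eq_zero_or_exists_pos_of_relint (hα r) (hk r) hg hcJc fun i hi => ?_
  exact (sum_sub_mul_massActionRate_eq_zero_iff S hα hβ (fun r => (hk r).le) hc
    (fun j => (hg j).le) (hcJ i hi)).1 (hsum i hi) r hr

end MassAction

open Finset in
/-- Equivalent characterizations of invariance of a face F_J with respect to a
set S of elementary reactions obeying the generalized mass action law. -/
theorem face_invariance_tfae (n m : ℕ) (α β : Fin m → (Fin n → ℝ))
    (hα : ∀ r i, 0 ≤ α r i) (hβ : ∀ r i, 0 ≤ β r i)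
    (k : Fin m → ℝ) (hk : ∀ r, 0 < k r)
    (g : (Fin n → ℝ) → (Fin n → ℝ)) (hg : ∀ c i, 0 < g c i)
    (w : Fin m → (Fin n → ℝ) → ℝ)
    (hw : ∀ r c, w r c = k r * ∏ j, (c j * g c j) ^ (α r j))
    (J : Finset (Fin n)) (S : Finset (Fin m)) :
    ((∃ c : Fin n → ℝ, (∀ j ∈ J, c j = 0) ∧ (∀ j ∉ J, 0 < c j) ∧
        ∀ i ∈ J, ∑ r ∈ S, (β r i - α r i) * w r c = 0) ↔
      (∀ c : Fin n → ℝ, (∀ j, 0 ≤ c j) → (∀ j ∈ J, c j = 0) →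
        ∀ i ∈ J, ∑ r ∈ S, (β r i - α r i) * w r c = 0)) ∧
    ((∀ c : Fin n → ℝ, (∀ j, 0 ≤ c j) → (∀ j ∈ J, c j = 0) →
        ∀ i ∈ J, ∑ r ∈ S, (β r i - α r i) * w r c = 0) ↔
      (∀ r ∈ S, ∀ c : Fin n → ℝ, (∀ j, 0 ≤ c j) → (∀ j ∈ J, c j = 0) →
        ∀ i ∈ J, (β r i - α r i) * w r c = 0)) ∧
    ((∀ r ∈ S, ∀ c : Fin n → ℝ, (∀ j, 0 ≤ c j) → (∀ j ∈ J, c j = 0) →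
        ∀ i ∈ J, (β r i - α r i) * w r c = 0) ↔
      (∀ r ∈ S, (∀ j ∈ J, β r j - α r j = 0) ∨ (∃ j ∈ J, 0 < α r j))) := by
  obtain rfl : w = fun r c => massActionRate (k r) (α r) g c := funext₂ hw
  refine iff_and_iff_and_iff_of_cycle ?_ ?_ ?_ ?_
  · rintro ⟨c, hcJ, hcJc, hsum⟩
    exact forall_sub_eq_zero_or_exists_pos_of_relint hα hβ hk (hg c) hcJ hcJc hsum
  · exact fun h r hr c _ hcJ i hi => sub_mul_massActionRate_eq_zero (h r hr) hcJ hi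
  · exact fun h c hc hcJ i hi => sum_eq_zero fun r hr => h r hr c hc hcJ i hi
  · refine fun h => ⟨fun j => if j ∈ J then 0 else 1, fun j hj => if_pos hj,
      fun j hj => by simp [hj], h _ (fun j => ?_) fun j hj => if_pos hj⟩
    split_ifs <;> norm_num
end

section
/- Let N : [0,∞) → ℝ^n_{≥0} be a solution of an autonomous ODE dN/dt = f(N) with f continuously differentiable, and let x* be an ω-limit point of N (i.e. N(t_j) → x* for some t_j → ∞). Then the solution x(τ) of the ODE with x(0) = x* satisfies x(τ) ∈ ℝ^n_{≥0} for all τ ∈ ℝ (positive and negative), and consequently if x*_i = 0 then f_i(x*) = 0. -/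
set_option autoImplicit false

/-!
Along a compact piece of trajectory a locally Lipschitz field is Lipschitz on a neighbourhood,
so Grönwall's inequality gives continuous dependence on the initial value over any bounded time
interval, forward and, after reversing time, backward. Hence `N (t_j + τ) → x τ` for every
fixed `τ`, and since `t_j + τ ≥ 0` eventually, `x τ` lies in the closed orthant. Finally, if
`x* i = 0` then `τ ↦ x τ i` has a local minimum at `0`, where its derivative `f x* i` vanishes.
-/

open Filter Set Metric Real Topology

section ContinuousDependence

variable {E : Type*} [NormedAddCommGroup E] [NormedSpace ℝ E]

theorem dist_le_mul_exp_of_lipschitzOnWith_cthickening {f : E → E} {x g : ℝ → E} {b r : ℝ}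
    {K : NNReal} (hK : LipschitzOnWith K f (cthickening r (x '' Icc 0 b)))
    (hx : ∀ t ∈ Icc 0 b, HasDerivAt x (f (x t)) t)
    (hg : ∀ t ∈ Icc 0 b, HasDerivAt g (f (g t)) t)
    (h0 : dist (g 0) (x 0) * exp (K * b) < r) :
    ∀ t ∈ Icc 0 b, dist (g t) (x t) ≤ dist (g 0) (x 0) * exp (K * t) := by
  set δ := dist (g 0) (x 0)
  have gronwall : ∀ T ≤ b, (∀ u ∈ Ico 0 T, dist (g u) (x u) ≤ r) →
      ∀ t ∈ Icc 0 T, dist (g t) (x t) ≤ δ * exp (K * t) := by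
    intro T hT hclose
    have hsub : Icc 0 T ⊆ Icc 0 b := Icc_subset_Icc_right hT
    have hsub' : Ico 0 T ⊆ Icc 0 b := Ico_subset_Icc_self.trans hsub
    simpa using dist_le_of_trajectories_ODE_of_mem (v := fun _ => f)
      (s := fun _ => cthickening r (x '' Icc 0 b)) (fun _ _ => hK)
      (fun t ht => (hg t (hsub ht)).continuousAt.continuousWithinAt)
      (fun t ht => (hg t (hsub' ht)).hasDerivWithinAt)
      (fun t ht => mem_cthickening_of_dist_le _ _ _ _ (mem_image_of_mem x (hsub' ht))
        (hclose t ht))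
      (fun t ht => (hx t (hsub ht)).continuousAt.continuousWithinAt)
      (fun t ht => (hx t (hsub' ht)).hasDerivWithinAt)
      (fun t ht => self_subset_cthickening _ (mem_image_of_mem x (hsub' ht))) le_rfl
  have hbound : ∀ t ∈ Icc 0 b, δ * exp (K * t) < r := fun t ht =>
    calc δ * exp (K * t) ≤ δ * exp (K * b) := by gcongr; exact ht.2
      _ < r := h0
  -- first exit time from the `r`-tube around `x`
  have hstay : ∀ t ∈ Icc 0 b, dist (g t) (x t) < r := by
    by_contra! ⟨t, ht, hrt⟩
    have hcont : ContinuousOn (fun t => dist (g t) (x t)) (Icc 0 b) := fun t ht =>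
      (hg t ht).continuousAt.continuousWithinAt.dist (hx t ht).continuousAt.continuousWithinAt
    have hexit : IsCompact (Icc 0 b ∩ (fun t => dist (g t) (x t)) ⁻¹' Ici r) :=
      isCompact_Icc.of_isClosed_subset
        (hcont.preimage_isClosed_of_isClosed isClosed_Icc isClosed_Ici) inter_subset_left
    obtain ⟨T, ⟨hT, hrT⟩, hTmin⟩ := hexit.exists_isLeast ⟨t, ht, hrt⟩
    have hbefore : ∀ u ∈ Ico 0 T, dist (g u) (x u) ≤ r := fun u hu =>
      (lt_of_not_ge fun hru => hu.2.not_ge (hTmin ⟨⟨hu.1, hu.2.le.trans hT.2⟩, hru⟩)).le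
    have := gronwall T hT.2 hbefore T ⟨hT.1, le_rfl⟩
    linarith [hbound T hT, show r ≤ dist (g T) (x T) from hrT]
  exact gronwall b le_rfl fun u hu => (hstay u (Ico_subset_Icc_self hu)).le

theorem tendsto_apply_of_tendsto_apply_zero [ProperSpace E] {f : E → E} (hf : LocallyLipschitz f)
    {x : ℝ → E} {b : ℝ} (hb : 0 ≤ b) (hx : ∀ t ∈ Icc 0 b, HasDerivAt x (f (x t)) t)
    {ι : Type*} {l : Filter ι} {g : ι → ℝ → E}
    (hg : ∀ᶠ j in l, ∀ t ∈ Icc 0 b, HasDerivAt (g j) (f (g j t)) t)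
    (h0 : Tendsto (fun j => g j 0) l (𝓝 (x 0))) :
    Tendsto (fun j => g j b) l (𝓝 (x b)) := by
  have hS : IsCompact (cthickening 1 (x '' Icc 0 b)) :=
    (isCompact_Icc.image_of_continuousOn fun t ht =>
      (hx t ht).continuousAt.continuousWithinAt).cthickening
  obtain ⟨K, hK⟩ := hf.locallyLipschitzOn.exists_lipschitzOnWith_of_compact hS
  have hδ : Tendsto (fun j => dist (g j 0) (x 0) * exp (K * b)) l (𝓝 0) := by
    simpa using (tendsto_iff_dist_tendsto_zero.1 h0).mul_const (exp (K * b))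
  rw [tendsto_iff_dist_tendsto_zero]
  refine squeeze_zero' (Eventually.of_forall fun _ => dist_nonneg) ?_ hδ
  filter_upwards [hg, hδ.eventually (gt_mem_nhds one_pos)] with j hgj hj
  exact dist_le_mul_exp_of_lipschitzOnWith_cthickening hK hx hgj hj b ⟨hb, le_rfl⟩

theorem tendsto_add_of_omega_limit [ProperSpace E] {f : E → E} (hf : ContDiff ℝ 1 f)
    {N : ℝ → E} (hN : ∀ t, 0 ≤ t → HasDerivAt N (f (N t)) t)
    {ι : Type*} {l : Filter ι} {tj : ι → ℝ} (htj : Tendsto tj l atTop)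
    {x : ℝ → E} (hlim : Tendsto (fun j => N (tj j)) l (𝓝 (x 0))) {s : ℝ}
    (hx : ∀ t ∈ uIcc 0 s, HasDerivAt x (f (x t)) t) :
    Tendsto (fun j => N (tj j + s)) l (𝓝 (x s)) := by
  rcases le_or_gt 0 s with hs | hs
  · refine tendsto_apply_of_tendsto_apply_zero (g := fun j t => N (tj j + t))
      hf.locallyLipschitz hs (fun t ht => hx t (uIcc_of_le hs ▸ ht)) ?_ (by simpa using hlim)
    filter_upwards [htj.eventually_ge_atTop 0] with j hj t ht
    exact (hN _ (by linarith [ht.1])).comp_const_add (tj j) t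
  · have hxrev : ∀ u ∈ Icc 0 (-s), HasDerivAt (fun u => x (0 - u)) (-f (x (0 - u))) u := by
      intro u hu
      refine (hx _ ?_).comp_const_sub 0 u
      rw [uIcc_of_ge hs.le]
      constructor <;> linarith [hu.1, hu.2]
    have hrev := tendsto_apply_of_tendsto_apply_zero (f := -f) hf.neg.locallyLipschitz
      (g := fun j u => N (tj j - u)) (neg_nonneg.2 hs.le) hxrev ?_ (by simpa using hlim)
    · simpa [sub_neg_eq_add] using hrev
    filter_upwards [htj.eventually_ge_atTop (-s)] with j hj u hu
    exact (hN _ (by linarith [hu.2])).comp_const_sub (tj j) u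

end ContinuousDependence

open Filter in
/-- An ω-limit point x* of a solution staying in the positive orthant generates
a whole trajectory in the orthant (for positive and negative times), and the
vector field vanishes in every coordinate where x* vanishes. -/
theorem omega_limit_trajectory_nonneg (n : ℕ)
    (f : (Fin n → ℝ) → (Fin n → ℝ)) (hf : ContDiff ℝ 1 f)
    (N : ℝ → (Fin n → ℝ))
    (hN : ∀ t, 0 ≤ t → HasDerivAt N (f (N t)) t)
    (hNpos : ∀ t, 0 ≤ t → ∀ i, 0 ≤ N t i)
    (xstar : Fin n → ℝ) (tj : ℕ → ℝ)
    (htj : Tendsto tj atTop atTop)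
    (hlim : Tendsto (fun j => N (tj j)) atTop (nhds xstar)) :
    (∀ x : ℝ → (Fin n → ℝ), x 0 = xstar →
        (∀ τ : ℝ, HasDerivAt x (f (x τ)) τ) → ∀ τ i, 0 ≤ x τ i) ∧
      ∀ i, xstar i = 0 → f xstar i = 0 := by
  have hmem : ∀ x : ℝ → (Fin n → ℝ), x 0 = xstar → ∀ s,
      (∀ t ∈ uIcc 0 s, HasDerivAt x (f (x t)) t) → ∀ i, 0 ≤ x s i := fun x hx0 s hx =>
    isClosed_Ici.mem_of_tendsto (tendsto_add_of_omega_limit hf hN htj (hx0 ▸ hlim) hx)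
      ((htj.eventually_ge_atTop (-s)).mono fun j hj => hNpos _ (by linarith))
  refine ⟨fun x hx0 hx τ => hmem x hx0 τ fun t _ => hx t, fun i hi => ?_⟩
  obtain ⟨x, hx0, ε, hε, hx⟩ :=
    (hf.contDiffAt (x := xstar)).exists_forall_mem_closedBall_exists_eq_forall_mem_Ioo_hasDerivAt₀
      0
  have hnhds : Ioo (0 - ε) (0 + ε) ∈ 𝓝 (0 : ℝ) := Ioo_mem_nhds (by linarith) (by linarith)
  have hmin : IsLocalMin (fun t => x t i) 0 := by
    filter_upwards [hnhds] with s hs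
    rw [hx0, hi]
    exact hmem x hx0 s (fun t ht =>
      hx t (ordConnected_Ioo.uIcc_subset (mem_of_mem_nhds hnhds) hs ht)) i
  have hderiv : HasDerivAt (fun t => x t i) (f xstar i) 0 := by
    simpa [hx0] using hasDerivAt_pi.1 (hx 0 (mem_of_mem_nhds hnhds)) i
  exact hmin.hasDerivAt_eq_zero hderiv
end

section
/- Let δ ∈ ℝ^n and suppose along a solution N(t) ∈ ℝ^n_{≥0} of the kinetic equations, (d/dt)(δ, N(t)) = V ∑_{r∈J₁} w_r(t)(γ_r, δ) with V > 0, (γ_r, δ) < 0 and w_r(t) ≥ 0 continuous for r ∈ J₁. If N(t) is bounded, then liminf_{t→∞} w_r(t) = 0 for each r ∈ J₁; in particular, if each w_r(t) converges as t → ∞ then w_r(t) → 0. -/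
/-! Along a bounded nonnegative solution the linear functional `(δ, N)` stays bounded below.
If some irreversible rate `w_r` stayed above `ε > 0`, then, all terms of the derivative being
nonpositive, `(δ, N)` would decrease at least at the constant speed `V ε |(γ_r, δ)|` and so tend
to `-∞`. Hence every `w_r` returns below every positive level, i.e. its liminf is `0`. -/

open Filter Finset

theorem tendsto_atBot_of_hasDerivAt_le_neg {f f' : ℝ → ℝ} {κ : ℝ} (hκ : κ < 0)
    (hf : ∀ᶠ t in atTop, HasDerivAt f (f' t) t) (hf' : ∀ᶠ t in atTop, f' t ≤ κ) :
    Tendsto f atTop atBot := by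
  obtain ⟨T, hT⟩ := eventually_atTop.mp (hf.and hf')
  have hlin : ∀ t ≥ T, f t ≤ f T + κ * (t - T) := by
    intro t ht
    have := (convex_Ici T).image_sub_le_mul_sub_of_deriv_le
      (fun x hx => (hT x hx).1.continuousAt.continuousWithinAt)
      (fun x hx => (hT x (interior_subset hx)).1.differentiableAt.differentiableWithinAt)
      (fun x hx => (hT x (interior_subset hx)).1.deriv ▸ (hT x (interior_subset hx)).2)
      T Set.self_mem_Ici t ht ht
    linarith
  refine tendsto_atBot_mono' _ (eventually_atTop.mpr ⟨T, hlin⟩) ?_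
  exact tendsto_atBot_add_const_left _ _
    ((tendsto_atTop_add_const_right _ _ tendsto_id).const_mul_atTop_of_neg hκ)

theorem not_tendsto_atBot_of_eventually_ge {f : ℝ → ℝ} {m : ℝ} (hm : ∀ᶠ t in atTop, m ≤ f t) :
    ¬ Tendsto f atTop atBot := fun h =>
  ((h.eventually_lt_atBot m).and hm).exists.elim fun _ ht => ht.1.not_ge ht.2

theorem frequently_lt_of_hasDerivAt_le_mul {f f' u : ℝ → ℝ} {a m : ℝ} (ha : a < 0)
    (hm : ∀ᶠ t in atTop, m ≤ f t) (hf : ∀ᶠ t in atTop, HasDerivAt f (f' t) t)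
    (hf' : ∀ᶠ t in atTop, f' t ≤ a * u t) {ε : ℝ} (hε : 0 < ε) :
    ∃ᶠ t in atTop, u t < ε := by
  by_contra! hu
  refine not_tendsto_atBot_of_eventually_ge hm
    (tendsto_atBot_of_hasDerivAt_le_neg (mul_neg_of_neg_of_pos ha hε) hf ?_)
  filter_upwards [hf', hu] with t hft hut
  exact hft.trans (mul_le_mul_of_nonpos_left hut ha.le)

theorem Filter.liminf_eq_zero_of_frequently_lt {α : Type*} {l : Filter α} {u : α → ℝ}
    (h₀ : ∀ᶠ x in l, 0 ≤ u x) (h : ∀ ε > 0, ∃ᶠ x in l, u x < ε) : liminf u l = 0 := by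
  have hset : {a : ℝ | ∀ᶠ x in l, a ≤ u x} = Set.Iic 0 := by
    ext a
    refine ⟨fun ha => Set.mem_Iic.mpr <| not_lt.mp fun hpos => ?_,
      fun ha => h₀.mono fun x hx => ha.trans hx⟩
    exact (h a hpos).and_eventually ha |>.exists.elim fun _ hx => hx.1.not_ge hx.2
  rw [liminf_eq, hset, csSup_Iic]

theorem Finset.neg_sum_abs_mul_le_sum_mul {ι : Type*} {s : Finset ι} {δ x : ι → ℝ} {C : ℝ}
    (hx₀ : ∀ i ∈ s, 0 ≤ x i) (hxC : ∀ i ∈ s, x i ≤ C) :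
    -∑ i ∈ s, |δ i| * C ≤ ∑ i ∈ s, δ i * x i := by
  rw [← sum_neg_distrib]
  refine sum_le_sum fun i hi => ?_
  calc -(|δ i| * C) ≤ -(|δ i| * x i) :=
        neg_le_neg (mul_le_mul_of_nonneg_left (hxC i hi) (abs_nonneg _))
    _ = -|δ i * x i| := by rw [abs_mul, abs_of_nonneg (hx₀ i hi)]
    _ ≤ δ i * x i := neg_abs_le _

open Filter Finset in
theorem irreversible_rates_tend_to_zero_general (n ℓ : ℕ)
    (γ : Fin ℓ → (Fin n → ℝ)) (δ : Fin n → ℝ) (J₁ : Finset (Fin ℓ))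
    (V : ℝ) (hV : 0 < V)
    (N : ℝ → (Fin n → ℝ)) (w : Fin ℓ → ℝ → ℝ)
    (hNpos : ∀ t, 0 ≤ t → ∀ i, 0 ≤ N t i)
    (hNbdd : ∃ C : ℝ, ∀ t, 0 ≤ t → ∀ i, N t i ≤ C)
    (hirr : ∀ r ∈ J₁, ∑ i, γ r i * δ i < 0)
    (hw : ∀ r ∈ J₁, ∀ t, 0 ≤ t → 0 ≤ w r t)
    (hG : ∀ t, 0 ≤ t → HasDerivAt (fun s => ∑ i, δ i * N s i)
        (V * ∑ r ∈ J₁, w r t * ∑ i, γ r i * δ i) t) :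
    (∀ r ∈ J₁, Filter.liminf (fun t => w r t) Filter.atTop = 0) ∧
      ∀ r ∈ J₁, ∀ L : ℝ, Tendsto (w r) atTop (nhds L) →
        Tendsto (w r) atTop (nhds 0) := by
  obtain ⟨C, hC⟩ := hNbdd
  have hlower : ∀ᶠ t in atTop, -∑ i, |δ i| * C ≤ ∑ i, δ i * N t i :=
    eventually_ge_atTop 0 |>.mono fun t ht =>
      neg_sum_abs_mul_le_sum_mul (fun i _ => hNpos t ht i) (fun i _ => hC t ht i)
  have hliminf : ∀ r ∈ J₁, liminf (w r) atTop = 0 := by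
    intro r hr
    refine liminf_eq_zero_of_frequently_lt ((eventually_ge_atTop 0).mono (hw r hr)) fun ε hε =>
      frequently_lt_of_hasDerivAt_le_mul (mul_neg_of_pos_of_neg hV (hirr r hr)) hlower
        ((eventually_ge_atTop 0).mono hG) ((eventually_ge_atTop 0).mono fun t ht => ?_) hε
    have hterm : ∀ r' ∈ J₁, w r' t * ∑ i, γ r' i * δ i ≤ 0 := fun r' hr' =>
      mul_nonpos_of_nonneg_of_nonpos (hw r' hr' t ht) (hirr r' hr').le
    calc V * ∑ r' ∈ J₁, w r' t * ∑ i, γ r' i * δ i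
        ≤ V * (w r t * ∑ i, γ r i * δ i) := by
          gcongr
          simpa using sum_le_sum_of_subset_of_nonpos' (singleton_subset_iff.mpr hr)
            fun r' hr' _ => hterm r' hr'
      _ = V * (∑ i, γ r i * δ i) * w r t := by ring
  exact ⟨hliminf, fun r hr L hL => hL.liminf_eq.symm.trans (hliminf r hr) ▸ hL⟩

open Filter Finset in
/-- If the solution is bounded, the rates of the irreversible reactions tend to
zero (in the liminf sense; in particular any converging rate tends to 0). -/
theorem irreversible_rates_tend_to_zero (n ℓ : ℕ)
    (γ : Fin ℓ → (Fin n → ℝ)) (δ : Fin n → ℝ) (J₁ : Finset (Fin ℓ))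
    (V : ℝ) (hV : 0 < V)
    (N : ℝ → (Fin n → ℝ)) (w : Fin ℓ → ℝ → ℝ)
    (hNpos : ∀ t, 0 ≤ t → ∀ i, 0 ≤ N t i)
    (hNbdd : ∃ C : ℝ, ∀ t, 0 ≤ t → ∀ i, N t i ≤ C)
    (hirr : ∀ r ∈ J₁, ∑ i, γ r i * δ i < 0)
    (hw : ∀ r ∈ J₁, ∀ t, 0 ≤ t → 0 ≤ w r t)
    (hwcont : ∀ r ∈ J₁, Continuous (w r))
    (hG : ∀ t, 0 ≤ t → HasDerivAt (fun s => ∑ i, δ i * N s i)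
        (V * ∑ r ∈ J₁, w r t * ∑ i, γ r i * δ i) t) :
    (∀ r ∈ J₁, Filter.liminf (fun t => w r t) Filter.atTop = 0) ∧
      ∀ r ∈ J₁, ∀ L : ℝ, Tendsto (w r) atTop (nhds L) →
        Tendsto (w r) atTop (nhds 0) :=
  irreversible_rates_tend_to_zero_general n ℓ γ δ J₁ V hV N w hNpos hNbdd hirr hw hG
end
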